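/- Let F₃(ρ) = ⟨1 + A₃B₃⟩_ρ² − ⟨A₃ + B₃⟩_ρ² − ⟨A₁B₁ + A₂B₂⟩_ρ², where A_i, B_j act on qubits 1 and 2 of a three-qubit state (identity on qubit 3) and the observables are same-orientation complementary sets. If a three-qubit mixed state ρ is fully separable, then F₁(ρ) ≥ 0, F₂(ρ) ≥ 0, and F₃(ρ) ≥ 0 for all such complementary observables, where F₁ and F₂ are the analogous expressions on qubit pairs (2,3) and (1,3). -/

import Mathlib

open scoped ComplexConjugate ComplexOrder
open Finset

abbrev Q3 := Fin 2 × Fin 2 × Fin 2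

noncomputable def pσ : Fin 3 → Matrix (Fin 2) (Fin 2) ℂ :=
  ![!![0, 1; 1, 0], !![0, -Complex.I; Complex.I, 0], !![1, 0; 0, -1]]

noncomputable def I2 : Matrix (Fin 2) (Fin 2) ℂ := 1

/-- Threefold tensor product operator `X ⊗ Y ⊗ Z` on `ℂ² ⊗ ℂ² ⊗ ℂ²`. -/
noncomputable def op3 (X Y Z : Matrix (Fin 2) (Fin 2) ℂ) : Matrix Q3 Q3 ℂ :=
  Matrix.of fun p q => X p.1 q.1 * Y p.2.1 q.2.1 * Z p.2.2 q.2.2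

/-- Expectation value `tr(ρ X)` (real part). -/
noncomputable def expec (ρ X : Matrix Q3 Q3 ℂ) : ℝ := ((ρ * X).trace).re

/-- Rank-one projector `|v⟩⟨v|`. -/
noncomputable def proj (v : Q3 → ℂ) : Matrix Q3 Q3 ℂ :=
  Matrix.of fun p q => v p * conj (v q)

/-- `a · σ` for a real vector `a ∈ ℝ³`. -/
noncomputable def dotSigma (a : Fin 3 → ℝ) : Matrix (Fin 2) (Fin 2) ℂ :=
  ∑ k, a k • pσ k

/-- A right-handed orthonormal basis of ℝ³. -/
def RightHandedONB (a : Fin 3 → Fin 3 → ℝ) : Prop :=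
  (∀ i j, (∑ k, a i k * a j k) = if i = j then 1 else 0) ∧
    crossProduct (a 0) (a 1) = a 2

/-- `ρ` is a density matrix. -/
def IsDensity {n : Type*} [Fintype n] [DecidableEq n] (ρ : Matrix n n ℂ) : Prop :=
  ρ.PosSemidef ∧ ρ.trace = 1

/-- `ρ` is a fully separable three-qubit state. -/
def FullySepState (ρ : Matrix Q3 Q3 ℂ) : Prop :=
  ∃ (N : ℕ) (p : Fin N → ℝ) (ρ1 ρ2 ρ3 : Fin N → Matrix (Fin 2) (Fin 2) ℂ),
    (∀ k, 0 ≤ p k) ∧ (∑ k, p k = 1) ∧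
    (∀ k, IsDensity (ρ1 k)) ∧ (∀ k, IsDensity (ρ2 k)) ∧ (∀ k, IsDensity (ρ3 k)) ∧
    ρ = ∑ k, p k • op3 (ρ1 k) (ρ2 k) (ρ3 k)

/-- `F₁`, built from observables `B, C` on qubits 2 and 3. -/
noncomputable def F1 (B C : Fin 3 → Matrix (Fin 2) (Fin 2) ℂ) (ρ : Matrix Q3 Q3 ℂ) : ℝ :=
  expec ρ (1 + op3 I2 (B 2) (C 2)) ^ 2
    - expec ρ (op3 I2 (B 2) I2 + op3 I2 I2 (C 2)) ^ 2
    - expec ρ (op3 I2 (B 0) (C 0) + op3 I2 (B 1) (C 1)) ^ 2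

/-- `F₂`, built from observables `A, C` on qubits 1 and 3. -/
noncomputable def F2 (A C : Fin 3 → Matrix (Fin 2) (Fin 2) ℂ) (ρ : Matrix Q3 Q3 ℂ) : ℝ :=
  expec ρ (1 + op3 (A 2) I2 (C 2)) ^ 2
    - expec ρ (op3 (A 2) I2 I2 + op3 I2 I2 (C 2)) ^ 2
    - expec ρ (op3 (A 0) I2 (C 0) + op3 (A 1) I2 (C 1)) ^ 2

/-- `F₃`, built from observables `A, B` on qubits 1 and 2. -/
noncomputable def F3 (A B : Fin 3 → Matrix (Fin 2) (Fin 2) ℂ) (ρ : Matrix Q3 Q3 ℂ) : ℝ :=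
  expec ρ (1 + op3 (A 2) (B 2) I2) ^ 2
    - expec ρ (op3 (A 2) I2 I2 + op3 I2 (B 2) I2) ^ 2
    - expec ρ (op3 (A 0) (B 0) I2 + op3 (A 1) (B 1) I2) ^ 2

/-! For a product state the local Bloch vectors `u, v` lie in the unit ball, and then
`(1 + u₂v₂)² - (u₂ + v₂)² = (1 - u₂²)(1 - v₂²) ≥ (u₀² + u₁²)(v₀² + v₁²) ≥ (u₀v₀ + u₁v₁)²`.
Hence each product term of a separable decomposition gives a point `(β, γ)` in the disc of
radius `α ≥ 0`, where `α, β, γ` are its three correlators; `F` is `α² - β² - γ²` of the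
weighted average, which stays nonnegative because the norm is convex. -/

open Matrix
open scoped Kronecker

theorem op3_eq_kronecker (X Y Z : Matrix (Fin 2) (Fin 2) ℂ) : op3 X Y Z = X ⊗ₖ (Y ⊗ₖ Z) := by
  ext p q
  simp [op3, mul_assoc]

theorem op3_mul_op3 (A B C X Y Z : Matrix (Fin 2) (Fin 2) ℂ) :
    op3 A B C * op3 X Y Z = op3 (A * X) (B * Y) (C * Z) := by
  simp only [op3_eq_kronecker, ← mul_kronecker_mul]

theorem trace_op3 (X Y Z : Matrix (Fin 2) (Fin 2) ℂ) :
    (op3 X Y Z).trace = X.trace * Y.trace * Z.trace := by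
  rw [op3_eq_kronecker, trace_kronecker, trace_kronecker, mul_assoc]

theorem op3_one_one_one : op3 I2 I2 I2 = 1 := by
  rw [op3_eq_kronecker, I2, one_kronecker_one, one_kronecker_one]

theorem expec_add (ρ X Y : Matrix Q3 Q3 ℂ) : expec ρ (X + Y) = expec ρ X + expec ρ Y := by
  rw [expec, expec, expec, mul_add, trace_add, Complex.add_re]

theorem expec_sum_smul {ι : Type*} (s : Finset ι) (p : ι → ℝ) (σ : ι → Matrix Q3 Q3 ℂ)
    (X : Matrix Q3 Q3 ℂ) : expec (∑ k ∈ s, p k • σ k) X = ∑ k ∈ s, p k * expec (σ k) X := by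
  simp [expec, Finset.sum_mul, trace_sum, trace_smul]

theorem expec_op3_op3 (τ₁ τ₂ τ₃ X Y Z : Matrix (Fin 2) (Fin 2) ℂ) :
    expec (op3 τ₁ τ₂ τ₃) (op3 X Y Z)
      = ((τ₁ * X).trace * (τ₂ * Y).trace * (τ₃ * Z).trace).re := by
  rw [expec, op3_mul_op3, trace_op3]

theorem entries_of_isHermitian {τ : Matrix (Fin 2) (Fin 2) ℂ} (hτ : τ.IsHermitian) :
    (τ 0 0).im = 0 ∧ (τ 1 1).im = 0 ∧ (τ 1 0).re = (τ 0 1).re ∧ (τ 1 0).im = -(τ 0 1).im := by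
  have h01 := hτ.apply 0 1
  have h00 := hτ.apply 0 0
  have h11 := hτ.apply 1 1
  simp only [Complex.ext_iff, Complex.star_def, Complex.conj_re, Complex.conj_im] at h01 h00 h11
  refine ⟨?_, ?_, ?_, ?_⟩ <;> linarith

noncomputable def blochVec (τ : Matrix (Fin 2) (Fin 2) ℂ) (k : Fin 3) : ℝ := ((τ * pσ k).trace).re

theorem blochVec_dotProduct_self {τ : Matrix (Fin 2) (Fin 2) ℂ} (hτ : τ.IsHermitian) :
    blochVec τ ⬝ᵥ blochVec τ = τ.trace.re ^ 2 - 4 * τ.det.re := by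
  obtain ⟨h00, h11, hre, him⟩ := entries_of_isHermitian hτ
  simp only [dotProduct, Fin.sum_univ_three, blochVec, pσ, trace_fin_two, det_fin_two, mul_apply,
    Fin.sum_univ_two, of_apply, cons_val', cons_val_zero, cons_val_one, cons_val_fin_one,
    Matrix.cons_val, Complex.add_re, Complex.sub_re, Complex.mul_re, Complex.neg_re,
    Complex.neg_im, Complex.I_re, Complex.I_im, Complex.one_re, Complex.one_im, Complex.zero_re,
    Complex.zero_im, h00, h11, hre, him]
  ring

theorem isHermitian_pσ (k : Fin 3) : (pσ k).IsHermitian := by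
  fin_cases k <;> ext i j <;> fin_cases i <;> fin_cases j <;> simp [pσ]

theorem isHermitian_dotSigma (v : Fin 3 → ℝ) : (dotSigma v).IsHermitian :=
  isSelfAdjoint_sum _ fun k _ => (IsSelfAdjoint.all (v k)).smul (isHermitian_pσ k)

theorem isSelfAdjoint_trace_mul {n R : Type*} [Fintype n] [CommRing R] [StarRing R]
    {A B : Matrix n n R} (hA : A.IsHermitian) (hB : B.IsHermitian) :
    IsSelfAdjoint (A * B).trace := by
  rw [isSelfAdjoint_iff, ← trace_conjTranspose, conjTranspose_mul, hA.eq, hB.eq, trace_mul_comm]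

theorem re_trace_mul_dotSigma (τ : Matrix (Fin 2) (Fin 2) ℂ) (v : Fin 3 → ℝ) :
    (τ * dotSigma v).trace.re = v ⬝ᵥ blochVec τ := by
  simp [dotSigma, mul_sum, trace_sum, dotProduct, blochVec]

theorem trace_mul_dotSigma {τ : Matrix (Fin 2) (Fin 2) ℂ} (hτ : τ.IsHermitian) (v : Fin 3 → ℝ) :
    (τ * dotSigma v).trace = ((v ⬝ᵥ blochVec τ : ℝ) : ℂ) :=
  (Complex.re_eq_ofReal_of_isSelfAdjoint (isSelfAdjoint_trace_mul hτ (isHermitian_dotSigma v))).mp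
    (re_trace_mul_dotSigma τ v)

theorem blochVec_dotProduct_self_le_one {τ : Matrix (Fin 2) (Fin 2) ℂ} (hτ : IsDensity τ) :
    blochVec τ ⬝ᵥ blochVec τ ≤ 1 := by
  have hdet : 0 ≤ τ.det.re := (Complex.nonneg_iff.mp hτ.1.det_nonneg).1
  rw [blochVec_dotProduct_self hτ.1.isHermitian, hτ.2, Complex.one_re]
  linarith

theorem dotProduct_mulVec_self_of_mul_transpose_eq_one {n : Type*} [Fintype n] [DecidableEq n]
    {A : Matrix n n ℝ} (hA : A * Aᵀ = 1) (r : n → ℝ) : (A *ᵥ r) ⬝ᵥ (A *ᵥ r) = r ⬝ᵥ r := by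
  rw [dotProduct_mulVec, ← vecMul_transpose, vecMul_vecMul, mul_eq_one_comm.mp hA, vecMul_one]

theorem RightHandedONB.mul_transpose_eq_one {a : Fin 3 → Fin 3 → ℝ} (ha : RightHandedONB a) :
    Matrix.of a * (Matrix.of a)ᵀ = 1 := by
  ext i j
  simpa [mul_apply, one_apply] using ha.1 i j

theorem one_add_mul_nonneg_of_unit_ball {u v : Fin 3 → ℝ} (hu : u ⬝ᵥ u ≤ 1) (hv : v ⬝ᵥ v ≤ 1) :
    0 ≤ 1 + u 2 * v 2 := by
  simp only [dotProduct, Fin.sum_univ_three] at hu hv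
  nlinarith [sq_nonneg (u 2 + v 2), sq_nonneg (u 0), sq_nonneg (u 1), sq_nonneg (v 0),
    sq_nonneg (v 1)]

theorem sq_add_sq_le_sq_of_unit_ball {u v : Fin 3 → ℝ} (hu : u ⬝ᵥ u ≤ 1) (hv : v ⬝ᵥ v ≤ 1) :
    (u 2 + v 2) ^ 2 + (u 0 * v 0 + u 1 * v 1) ^ 2 ≤ (1 + u 2 * v 2) ^ 2 := by
  simp only [dotProduct, Fin.sum_univ_three] at hu hv
  have cauchy_schwarz :
      (u 0 * v 0 + u 1 * v 1) ^ 2 ≤ (u 0 ^ 2 + u 1 ^ 2) * (v 0 ^ 2 + v 1 ^ 2) := by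
    nlinarith [sq_nonneg (u 0 * v 1 - u 1 * v 0)]
  have hprod : (u 0 ^ 2 + u 1 ^ 2) * (v 0 ^ 2 + v 1 ^ 2) ≤ (1 - u 2 ^ 2) * (1 - v 2 ^ 2) :=
    mul_le_mul (by linarith) (by linarith) (by positivity) (by nlinarith)
  -- `(1 + u₂v₂)² - (u₂ + v₂)² = (1 - u₂²)(1 - v₂²)`
  nlinarith

theorem sq_add_sq_le_sq_sum_of_sq_add_sq_le_sq {ι : Type*} (s : Finset ι) (p α β γ : ι → ℝ)
    (hp : ∀ k ∈ s, 0 ≤ p k) (hα : ∀ k ∈ s, 0 ≤ α k)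
    (h : ∀ k ∈ s, β k ^ 2 + γ k ^ 2 ≤ α k ^ 2) :
    (∑ k ∈ s, p k * β k) ^ 2 + (∑ k ∈ s, p k * γ k) ^ 2 ≤ (∑ k ∈ s, p k * α k) ^ 2 := by
  -- the triangle inequality for `w k = β k + γ k i`
  set w : ι → ℂ := fun k => ⟨β k, γ k⟩
  have hw : ∀ k ∈ s, ‖w k‖ ≤ α k := fun k hk => by
    rw [← sq_le_sq₀ (norm_nonneg _) (hα k hk), Complex.sq_norm, Complex.normSq_apply, ← sq, ← sq]
    exact h k hk
  have hsum : ‖∑ k ∈ s, p k • w k‖ ≤ ∑ k ∈ s, p k * α k :=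
    calc ‖∑ k ∈ s, p k • w k‖ ≤ ∑ k ∈ s, ‖p k • w k‖ := norm_sum_le _ _
      _ ≤ ∑ k ∈ s, p k * α k := Finset.sum_le_sum fun k hk => by
        rw [norm_smul, Real.norm_of_nonneg (hp k hk)]
        exact mul_le_mul_of_nonneg_left (hw k hk) (hp k hk)
  have hnorm : ‖∑ k ∈ s, p k • w k‖ ^ 2 = (∑ k ∈ s, p k * β k) ^ 2 + (∑ k ∈ s, p k * γ k) ^ 2 := by
    rw [Complex.sq_norm, Complex.normSq_apply, Complex.re_sum, Complex.im_sum, ← sq, ← sq]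
    simp [w]
  exact hnorm ▸ pow_le_pow_left₀ (norm_nonneg _) hsum 2

theorem expec_correlation_nonneg_of_mixture {ι : Type*} (s : Finset ι) (p : ι → ℝ)
    (σ : ι → Matrix Q3 Q3 ℂ) (O₁ O₂ O₃ : Matrix Q3 Q3 ℂ) (u v : ι → Fin 3 → ℝ)
    (hp : ∀ k ∈ s, 0 ≤ p k) (hu : ∀ k ∈ s, u k ⬝ᵥ u k ≤ 1) (hv : ∀ k ∈ s, v k ⬝ᵥ v k ≤ 1)
    (h₁ : ∀ k, expec (σ k) O₁ = 1 + u k 2 * v k 2) (h₂ : ∀ k, expec (σ k) O₂ = u k 2 + v k 2)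
    (h₃ : ∀ k, expec (σ k) O₃ = u k 0 * v k 0 + u k 1 * v k 1) :
    0 ≤ expec (∑ k ∈ s, p k • σ k) O₁ ^ 2 - expec (∑ k ∈ s, p k • σ k) O₂ ^ 2
      - expec (∑ k ∈ s, p k • σ k) O₃ ^ 2 := by
  simp only [expec_sum_smul, h₁, h₂, h₃]
  have := sq_add_sq_le_sq_sum_of_sq_add_sq_le_sq s p _ _ _ hp
    (fun k hk => one_add_mul_nonneg_of_unit_ball (hu k hk) (hv k hk))
    (fun k hk => sq_add_sq_le_sq_of_unit_ball (hu k hk) (hv k hk))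
  linarith

theorem trace_mul_I2 {τ : Matrix (Fin 2) (Fin 2) ℂ} (hτ : IsDensity τ) : (τ * I2).trace = 1 := by
  rw [I2, mul_one, hτ.2]

theorem trace_mul_dotSigma_row {τ : Matrix (Fin 2) (Fin 2) ℂ} (hτ : τ.IsHermitian)
    (a : Fin 3 → Fin 3 → ℝ) (i : Fin 3) :
    (τ * dotSigma (a i)).trace = ((Matrix.of a *ᵥ blochVec τ) i : ℝ) :=
  trace_mul_dotSigma hτ (a i)

theorem mulVec_blochVec_dotProduct_self_le_one {τ : Matrix (Fin 2) (Fin 2) ℂ} (hτ : IsDensity τ)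
    {a : Fin 3 → Fin 3 → ℝ} (ha : RightHandedONB a) :
    (Matrix.of a *ᵥ blochVec τ) ⬝ᵥ (Matrix.of a *ᵥ blochVec τ) ≤ 1 := by
  rw [dotProduct_mulVec_self_of_mul_transpose_eq_one ha.mul_transpose_eq_one]
  exact blochVec_dotProduct_self_le_one hτ

theorem stmt19_general (ρ : Matrix Q3 Q3 ℂ) (hsep : FullySepState ρ)
    (a b c : Fin 3 → Fin 3 → ℝ)
    (ha : RightHandedONB a) (hb : RightHandedONB b) (hc : RightHandedONB c) :
    0 ≤ F1 (fun i => dotSigma (b i)) (fun i => dotSigma (c i)) ρ ∧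
    0 ≤ F2 (fun i => dotSigma (a i)) (fun i => dotSigma (c i)) ρ ∧
    0 ≤ F3 (fun i => dotSigma (a i)) (fun i => dotSigma (b i)) ρ := by
  obtain ⟨N, p, ρ₁, ρ₂, ρ₃, hp, -, h₁, h₂, h₃, rfl⟩ := hsep
  set x := fun k => Matrix.of a *ᵥ blochVec (ρ₁ k)
  set y := fun k => Matrix.of b *ᵥ blochVec (ρ₂ k)
  set z := fun k => Matrix.of c *ᵥ blochVec (ρ₃ k)
  have hx k : x k ⬝ᵥ x k ≤ 1 := mulVec_blochVec_dotProduct_self_le_one (h₁ k) ha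
  have hy k : y k ⬝ᵥ y k ≤ 1 := mulVec_blochVec_dotProduct_self_le_one (h₂ k) hb
  have hz k : z k ⬝ᵥ z k ≤ 1 := mulVec_blochVec_dotProduct_self_le_one (h₃ k) hc
  refine ⟨expec_correlation_nonneg_of_mixture _ p _ _ _ _ y z (fun k _ => hp k)
      (fun k _ => hy k) (fun k _ => hz k) ?_ ?_ ?_,
    expec_correlation_nonneg_of_mixture _ p _ _ _ _ x z (fun k _ => hp k)
      (fun k _ => hx k) (fun k _ => hz k) ?_ ?_ ?_,
    expec_correlation_nonneg_of_mixture _ p _ _ _ _ x y (fun k _ => hp k)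
      (fun k _ => hx k) (fun k _ => hy k) ?_ ?_ ?_⟩
  all_goals
    intro k
    simp [x, y, z, expec_add, ← op3_one_one_one, expec_op3_op3, trace_mul_I2, h₁ k, h₂ k, h₃ k,
      trace_mul_dotSigma_row (h₁ k).1.1, trace_mul_dotSigma_row (h₂ k).1.1,
      trace_mul_dotSigma_row (h₃ k).1.1]

theorem stmt19 (ρ : Matrix Q3 Q3 ℂ) (hρ : IsDensity ρ) (hsep : FullySepState ρ)
    (a b c : Fin 3 → Fin 3 → ℝ)
    (ha : RightHandedONB a) (hb : RightHandedONB b) (hc : RightHandedONB c) :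
    0 ≤ F1 (fun i => dotSigma (b i)) (fun i => dotSigma (c i)) ρ ∧
    0 ≤ F2 (fun i => dotSigma (a i)) (fun i => dotSigma (c i)) ρ ∧
    0 ≤ F3 (fun i => dotSigma (a i)) (fun i => dotSigma (b i)) ρ :=
  stmt19_general ρ hsep a b c ha hb hc
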